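/- arXiv:1402.5122 — 3 statements merged into one kernel-verified Lean document; each statement's English description precedes it below -/
import Mathlib

section
/- Let A be a finite-dimensional algebra over a field K with ideal N such that N is nilpotent, A/N is split, and let L be a field extension of K. Then Jac(L ⊗_K A) = L ⊗_K Jac(A), i.e., the Jacobson radical of a finite-dimensional split algebra is stable under scalar extension of the base field. -/
open TensorProduct

/-- A `K`-algebra `A` is split if the endomorphisms of every simple `A`-module are just the
scalars from `K`. -/
def IsSplit (K : Type) (A : Type) [CommRing K] [Ring A] [Algebra K A] : Prop :=
  ∀ (S : Type) (_ : AddCommGroup S) (_ : Module A S), IsSimpleModule A S →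
    ∀ f : S →ₗ[A] S, ∃ c : K, ∀ x : S, f x = algebraMap K A c • x

/-!
A left ideal consisting of nilpotent elements lies in the Jacobson radical. Since `Jac(A)` is
nilpotent, so is the ideal `L ⊗ Jac(A)`, which gives one inclusion.

For the other, write `z ∈ Jac(L ⊗ A)` as `∑ bᵢ ⊗ zᵢ` in a `K`-basis `(bᵢ)` of `L`. Pushing `z`
along `A → B = A/N` lands in `Jac(L ⊗ B)`, and since `N ⊆ Jac(A)` it suffices that every `π zᵢ`
lies in `Jac(B)`. Let `V` be a simple `B`-module. As `End_B(V) = K`, the Jacobson density theorem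
makes `B → End_K(V)` surjective, hence `L ⊗ B → End_L(L ⊗ V)` is surjective onto a semisimple
ring, which kills the image of the Jacobson radical. Evaluating at `1 ⊗ v` shows that every
coefficient annihilates `V`; taking `V = B/m` for the maximal left ideals `m` concludes.
-/

theorem Ideal.le_jacobson_of_forall_isNilpotent {R : Type*} [Ring R] {I : Ideal R}
    (h : ∀ x ∈ I, IsNilpotent x) : I ≤ Ring.jacobson R := by
  intro x hx
  rw [← Ideal.jacobson_bot, Ideal.mem_jacobson_iff]
  intro y
  obtain ⟨u, hu⟩ := (h _ (I.mul_mem_left y hx)).isUnit_one_add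
  have hinv : (↑u⁻¹ : R) * (1 + y * x) = 1 := by rw [← hu, Units.inv_mul]
  refine ⟨↑u⁻¹, ?_⟩
  rw [Ideal.mem_bot, sub_eq_zero, ← hinv, mul_add, mul_one, add_comm, mul_assoc]

theorem mem_jacobson_of_map_mem_jacobson {R S : Type*} [Ring R] [Ring S] {f : R →+* S}
    (hf : Function.Surjective f) (hker : RingHom.ker f ≤ Ring.jacobson R) {x : R}
    (hx : f x ∈ Ring.jacobson S) : x ∈ Ring.jacobson R := by
  have : RingHomSurjective f := ⟨hf⟩
  exact (Module.comap_jacobson_of_ker_le (f := f.toSemilinearMap) hf hker).le hx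

theorem TensorProduct.equivFinsuppOfBasisLeft_lTensor {K L M N ι : Type*} [DecidableEq ι]
    [CommSemiring K] [AddCommMonoid L] [Module K L] [AddCommMonoid M] [Module K M]
    [AddCommMonoid N] [Module K N] (b : Module.Basis ι K L) (f : M →ₗ[K] N) (x : L ⊗[K] M)
    (i : ι) : equivFinsuppOfBasisLeft b (f.lTensor L x) i = f (equivFinsuppOfBasisLeft b x i) := by
  induction x using TensorProduct.induction_on with
  | zero => simp
  | tmul c m => simp
  | add x y hx hy => simp [hx, hy]

section PureTensors

variable (K L : Type*) {A : Type*} [CommRing K] [Ring L] [Algebra K L] [Ring A] [Algebra K A]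

def pureTensors (P : Set A) : Set (L ⊗[K] A) := {y | ∃ x ∈ P, ∃ c : L, y = c ⊗ₜ[K] x}

variable {K L}

theorem pureTensors_mono {P Q : Set A} (h : P ⊆ Q) : pureTensors K L P ⊆ pureTensors K L Q :=
  fun _ ⟨x, hx, c, hy⟩ ↦ ⟨x, h hx, c, hy⟩

theorem span_pureTensors_mul_le (P Q : Submodule K A) :
    Submodule.span K (pureTensors K L (P : Set A)) *
        Submodule.span K (pureTensors K L (Q : Set A)) ≤
      Submodule.span K (pureTensors K L ((P * Q : Submodule K A) : Set A)) := by
  rw [Submodule.span_mul_span]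
  refine Submodule.span_mono ?_
  rintro _ ⟨_, ⟨x, hx, c, rfl⟩, _, ⟨y, hy, d, rfl⟩, rfl⟩
  exact ⟨x * y, Submodule.mul_mem_mul hx hy, c * d, Algebra.TensorProduct.tmul_mul_tmul c d x y⟩

theorem span_pureTensors_pow_le (P : Submodule K A) (n : ℕ) :
    Submodule.span K (pureTensors K L (P : Set A)) ^ (n + 1) ≤
      Submodule.span K (pureTensors K L ((P ^ (n + 1) : Submodule K A) : Set A)) := by
  induction n with
  | zero => simp
  | succ n ih =>
    rw [pow_succ, pow_succ P]
    exact (mul_le_mul_left ih _).trans (span_pureTensors_mul_le _ _)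

theorem pow_eq_zero_of_mem_span_pureTensors {P : Submodule K A} {n : ℕ} (hP : P ^ (n + 1) = ⊥)
    {w : L ⊗[K] A} (hw : w ∈ Submodule.span K (pureTensors K L (P : Set A))) :
    w ^ (n + 1) = 0 := by
  have := span_pureTensors_pow_le P n (Submodule.pow_mem_pow _ hw (n + 1))
  simpa [hP, pureTensors] using this

theorem mem_span_pureTensors_of_mem_ideal_span {I : Ideal A} {w : L ⊗[K] A}
    (hw : w ∈ Ideal.span (pureTensors K L I)) :
    w ∈ Submodule.span K (pureTensors K L (I.restrictScalars K : Set A)) := by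
  induction hw using Submodule.span_induction with
  | mem w hw => exact Submodule.subset_span hw
  | zero => exact zero_mem _
  | add _ _ _ _ hx hy => exact add_mem hx hy
  | smul r w _ hw =>
    have hr : r ∈ Submodule.span K (pureTensors K L ((⊤ : Submodule K A) : Set A)) := by
      refine (Submodule.span_mono ?_) (TensorProduct.span_tmul_eq_top K L A ▸ Submodule.mem_top)
      rintro _ ⟨c, a, rfl⟩
      exact ⟨a, trivial, c, rfl⟩
    have hI : (⊤ : Submodule K A) * I.restrictScalars K ≤ I.restrictScalars K :=
      Submodule.mul_le.mpr fun a _ x hx ↦ I.mul_mem_left a hx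
    exact Submodule.span_mono (pureTensors_mono hI)
      (span_pureTensors_mul_le _ _ (Submodule.mul_mem_mul hr hw))

theorem ideal_span_pureTensors_le_jacobson {I : Ideal A} (hI : IsNilpotent I) :
    Ideal.span (pureTensors K L I) ≤ Ring.jacobson (L ⊗[K] A) := by
  obtain ⟨n, hn⟩ := hI
  have hn' : I.restrictScalars K ^ (n + 1) = ⊥ := by
    rw [← Submodule.restrictScalars_pow n.add_one_ne_zero, Submodule.pow_succ, hn, zero_mul]
    rfl
  exact Ideal.le_jacobson_of_forall_isNilpotent fun w hw ↦
    ⟨n + 1, pow_eq_zero_of_mem_span_pureTensors hn' (mem_span_pureTensors_of_mem_ideal_span hw)⟩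

theorem mem_ideal_span_pureTensors_of_forall_mem {ι : Type*} [DecidableEq ι] {P : Set A}
    (b : Module.Basis ι K L) {z : L ⊗[K] A} (h : ∀ i, equivFinsuppOfBasisLeft b z i ∈ P) :
    z ∈ Ideal.span (pureTensors K L P) := by
  rw [← (equivFinsuppOfBasisLeft b).symm_apply_apply z, equivFinsuppOfBasisLeft_symm_apply]
  exact Submodule.finsuppSum_mem _ _ _ _ fun i _ ↦ Ideal.subset_span ⟨_, h i, b i, rfl⟩

end PureTensors

theorem lsmul_surjective_of_forall_end_eq_smul {K A V : Type*} [CommRing K] [Ring A] [Algebra K A]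
    [AddCommGroup V] [Module K V] [Module A V] [IsScalarTower K A V] [IsSimpleModule A V]
    [Module.Finite K V] (hEnd : ∀ f : V →ₗ[A] V, ∃ c : K, ∀ v, f v = c • v) :
    Function.Surjective (Algebra.lsmul K K V : A →ₐ[K] Module.End K V) := by
  intro g
  have : Module.Finite (Module.End A V) V := Module.Finite.of_restrictScalars_finite K _ _
  let g' : Module.End (Module.End A V) V :=
    { toFun := g
      map_add' := g.map_add
      map_smul' := fun f v ↦ by
        obtain ⟨c, hc⟩ := hEnd f
        simp [hc] }
  obtain ⟨a, ha⟩ := Module.Finite.toModuleEnd_moduleEnd_surjective g'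
  exact ⟨a, LinearMap.ext fun v ↦ congr($ha v)⟩

section BaseChange

variable (K L A V : Type*) [Field K] [Field L] [Algebra K L] [Ring A] [Algebra K A]
  [AddCommGroup V] [Module K V] [Module A V] [IsScalarTower K A V]

noncomputable def lsmulBaseChange : L ⊗[K] A →ₐ[L] Module.End L (L ⊗[K] V) :=
  Algebra.TensorProduct.lift (Algebra.ofId L _)
    ((Module.End.baseChangeHom K L V).comp (Algebra.lsmul K K V))
    fun c _ ↦ show Commute (Algebra.ofId L _ c) _ from Algebra.commute_algebraMap_left c _

variable {K L A V}

theorem lsmulBaseChange_tmul (c : L) (a : A) :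
    lsmulBaseChange K L A V (c ⊗ₜ a) = c • (Algebra.lsmul K K V a).baseChange L := by
  rw [lsmulBaseChange, Algebra.TensorProduct.lift_tmul, Algebra.smul_def]
  rfl

theorem lsmulBaseChange_apply_one_tmul (z : L ⊗[K] A) (v : V) :
    lsmulBaseChange K L A V z (1 ⊗ₜ v) =
      ((LinearMap.toSpanSingleton A V v).restrictScalars K).lTensor L z := by
  induction z using TensorProduct.induction_on with
  | zero => simp
  | tmul c a => simp [lsmulBaseChange_tmul, smul_tmul']
  | add x y hx hy => simp [hx, hy]

theorem lsmulBaseChange_surjective [FiniteDimensional K V]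
    (h : Function.Surjective (Algebra.lsmul K K V : A →ₐ[K] Module.End K V)) :
    Function.Surjective (lsmulBaseChange K L A V) := by
  have := Module.finitePresentation_of_finite K V
  -- every `L`-linear endomorphism of `L ⊗ V` is an `L`-combination of base changes
  have hbc := Module.FinitePresentation.isBaseChange_map K V V L
  intro g
  obtain ⟨t, rfl⟩ := hbc.equiv.surjective g
  induction t using TensorProduct.induction_on with
  | zero => exact ⟨0, by simp⟩
  | tmul c f =>
    obtain ⟨a, rfl⟩ := h f
    exact ⟨c ⊗ₜ a, by simp [lsmulBaseChange_tmul, hbc.equiv_tmul]⟩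
  | add x y hx hy =>
    obtain ⟨x', hx'⟩ := hx
    obtain ⟨y', hy'⟩ := hy
    exact ⟨x' + y', by simp [hx', hy']⟩

theorem lsmulBaseChange_eq_zero_of_mem_jacobson [FiniteDimensional K V]
    (h : Function.Surjective (Algebra.lsmul K K V : A →ₐ[K] Module.End K V))
    {z : L ⊗[K] A} (hz : z ∈ Ring.jacobson (L ⊗[K] A)) : lsmulBaseChange K L A V z = 0 := by
  let φ : L ⊗[K] A →+* Module.End L (L ⊗[K] V) := lsmulBaseChange K L A V
  have : RingHomSurjective φ := ⟨lsmulBaseChange_surjective h⟩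
  have := IsSemisimpleRing.moduleEnd L (L ⊗[K] V)
  exact IsSemisimpleModule.jacobson_le_ker (L ⊗[K] A) (Module.End L (L ⊗[K] V)) (L ⊗[K] A)
    (Module.End L (L ⊗[K] V)) φ.toSemilinearMap hz

theorem equivFinsuppOfBasisLeft_smul_eq_zero_of_mem_jacobson {ι : Type*} [DecidableEq ι]
    [IsSimpleModule A V] [FiniteDimensional K V] (hEnd : ∀ f : V →ₗ[A] V, ∃ c : K, ∀ v, f v = c • v)
    (b : Module.Basis ι K L) {z : L ⊗[K] A} (hz : z ∈ Ring.jacobson (L ⊗[K] A)) (i : ι) (v : V) :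
    equivFinsuppOfBasisLeft b z i • v = 0 := by
  have h := lsmulBaseChange_eq_zero_of_mem_jacobson (lsmul_surjective_of_forall_end_eq_smul hEnd) hz
  have := congr(equivFinsuppOfBasisLeft b ($h (1 ⊗ₜ v)) i)
  simpa [lsmulBaseChange_apply_one_tmul, equivFinsuppOfBasisLeft_lTensor] using this

end BaseChange

theorem equivFinsuppOfBasisLeft_mem_jacobson_of_isSplit {K B : Type} {L ι : Type*} [Field K]
    [Field L] [Algebra K L] [Ring B] [Algebra K B] [FiniteDimensional K B] [DecidableEq ι]
    (hB : IsSplit K B) (b : Module.Basis ι K L) {z : L ⊗[K] B}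
    (hz : z ∈ Ring.jacobson (L ⊗[K] B)) (i : ι) :
    equivFinsuppOfBasisLeft b z i ∈ Ring.jacobson B := by
  rw [Ring.jacobson_eq_sInf_isMaximal, Submodule.mem_sInf]
  intro m hm
  have hsimple : IsSimpleModule B (B ⧸ m) :=
    isSimpleModule_iff_isCoatom.mpr (Ideal.isMaximal_def.mp hm)
  have hEnd (f : (B ⧸ m) →ₗ[B] B ⧸ m) : ∃ c : K, ∀ v, f v = c • v := by
    obtain ⟨c, hc⟩ := hB _ _ _ hsimple f
    exact ⟨c, fun v ↦ by rw [hc, algebraMap_smul]⟩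
  have := equivFinsuppOfBasisLeft_smul_eq_zero_of_mem_jacobson hEnd b hz i (Submodule.Quotient.mk 1)
  rwa [← Submodule.Quotient.mk_smul, smul_eq_mul, mul_one, Submodule.Quotient.mk_eq_zero] at this

theorem jacobson_baseChange_le_of_isSplit_quotient {K B : Type} {L A : Type*} [Field K] [Field L]
    [Algebra K L] [Ring A] [Algebra K A] [Ring B] [Algebra K B] [FiniteDimensional K B]
    (π : A →ₐ[K] B) (hπ : Function.Surjective π) (hker : RingHom.ker π.toRingHom ≤ Ring.jacobson A)
    (hB : IsSplit K B) :
    Ring.jacobson (L ⊗[K] A) ≤ Ideal.span (pureTensors K L (Ring.jacobson A : Set A)) := by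
  classical
  intro z hz
  let b := Module.Basis.ofVectorSpace K L
  let πL := Algebra.TensorProduct.map (AlgHom.id L L) π
  have : RingHomSurjective πL.toRingHom :=
    ⟨Algebra.TensorProduct.map_surjective _ _ Function.surjective_id hπ⟩
  have hzB : πL z ∈ Ring.jacobson (L ⊗[K] B) :=
    Ring.map_jacobson_le πL.toRingHom (Submodule.mem_map_of_mem hz)
  refine mem_ideal_span_pureTensors_of_forall_mem b fun i ↦
    mem_jacobson_of_map_mem_jacobson hπ hker ?_
  have := equivFinsuppOfBasisLeft_mem_jacobson_of_isSplit hB b hzB i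
  rwa [show πL z = π.toLinearMap.lTensor L z from rfl, equivFinsuppOfBasisLeft_lTensor] at this

theorem jacobson_baseChange_of_split_general
    (K L : Type) [Field K] [Field L] [Algebra K L]
    (A : Type) [Ring A] [Algebra K A] [FiniteDimensional K A]
    (N : Ideal A)
    (hNnil : ∃ n : ℕ, ∀ l : List A, l.length = n → (∀ x ∈ l, x ∈ N) → l.prod = 0)
    (hsplit : ∃ (B : Type) (_ : Ring B) (_ : Algebra K B) (π : A →ₐ[K] B),
        Function.Surjective π ∧ RingHom.ker π.toRingHom = N ∧ IsSplit K B) :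
    Ideal.jacobson (⊥ : Ideal (L ⊗[K] A)) =
      Ideal.span {y : L ⊗[K] A |
        ∃ x ∈ Ideal.jacobson (⊥ : Ideal A), ∃ c : L, y = c ⊗ₜ[K] x} := by
  obtain ⟨B, _, _, π, hπ, hker, hB⟩ := hsplit
  obtain ⟨n, hn⟩ := hNnil
  have : FiniteDimensional K B := Module.Finite.of_surjective π.toLinearMap hπ
  have : IsArtinianRing A := IsArtinianRing.of_finite K A
  have hN : N ≤ Ring.jacobson A := Ideal.le_jacobson_of_forall_isNilpotent fun x hx ↦
    ⟨n, List.prod_replicate n x ▸ hn _ List.length_replicate fun y hy ↦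
      List.eq_of_mem_replicate hy ▸ hx⟩
  rw [Ideal.jacobson_bot, Ideal.jacobson_bot]
  exact le_antisymm (jacobson_baseChange_le_of_isSplit_quotient π hπ (hker ▸ hN) hB)
    (ideal_span_pureTensors_le_jacobson IsSemiprimaryRing.isNilpotent)

/-- Let `A` be a finite-dimensional algebra over a field `K` admitting a
(two-sided) ideal `N` which is nilpotent and such that `A/N` is split (i.e. `A` is split),
and let `L/K` be a field extension. Then `Jac(L ⊗[K] A) = L ⊗[K] Jac(A)`: the Jacobson
radical is stable under scalar extension. -/
theorem jacobson_baseChange_of_split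
    (K L : Type) [Field K] [Field L] [Algebra K L]
    (A : Type) [Ring A] [Algebra K A] [FiniteDimensional K A]
    (N : Ideal A)
    (hN2 : ∀ x ∈ N, ∀ a : A, x * a ∈ N)
    (hNnil : ∃ n : ℕ, ∀ l : List A, l.length = n → (∀ x ∈ l, x ∈ N) → l.prod = 0)
    (hsplit : ∃ (B : Type) (_ : Ring B) (_ : Algebra K B) (π : A →ₐ[K] B),
        Function.Surjective π ∧ RingHom.ker π.toRingHom = N ∧ IsSplit K B) :
    Ideal.jacobson (⊥ : Ideal (L ⊗[K] A)) =
      Ideal.span {y : L ⊗[K] A |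
        ∃ x ∈ Ideal.jacobson (⊥ : Ideal A), ∃ c : L, y = c ⊗ₜ[K] x} :=
  jacobson_baseChange_of_split_general K L A N hNnil hsplit
end

section
/- Let O be a discrete valuation ring with maximal ideal m, residue field k and fraction field K, and let A be a finite free O-algebra such that the special fiber A(m) = k ⊗_O A is a split k-algebra. Then dim_k Jac(A(m)) ≥ dim_K Jac(A^K). -/
open TensorProduct

/-!
Let `J = A ∩ Jac(A^K)` inside `A^K = K ⊗ A`. Since `Jac(A^K)` is a `K`-subspace, `A / J` is
torsion-free, hence flat over the principal ideal domain `O`, so `F ⊗ J → F ⊗ A` stays injective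
for every field `F` over `O`. Thus `dim_K Jac(A^K) ≤ dim_K (K ⊗ J) = rank J = dim_k (k ⊗ J)`, and
`k ⊗ J` is a subspace of `A(m)`. It lies in `Jac(A(m))`: `J` is a left ideal of nilpotent elements
(as `A^K` is Artinian) and `A → A(m)` is surjective, so for `x ∈ J` every `y (1 ⊗ x)` is nilpotent.
-/

theorem Submodule.finrank_range_baseChange_subtype {R M : Type*} (F : Type*) [CommRing R]
    [AddCommGroup M] [Module R M] [Field F] [Algebra R F] (N : Submodule R M)
    [Module.Flat R (M ⧸ N)] [Module.Free R N] [Module.Finite R N] :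
    Module.finrank F (LinearMap.range (N.subtype.baseChange F)) = Module.finrank R N := by
  have : Nontrivial R := (algebraMap R F).domain_nontrivial
  have hinj : Function.Injective (N.subtype.baseChange F) := by
    rw [LinearMap.baseChange_eq_ltensor]
    exact LinearMap.lTensor_injective_of_exact_of_flat N.mkQ N.mkQ_surjective N.subtype
      N.injective_subtype (LinearMap.exact_subtype_mkQ N) F
  rw [LinearMap.finrank_range_of_inj hinj, Module.finrank_baseChange]

theorem mem_jacobson_bot_of_forall_isNilpotent_mul {B : Type*} [Ring B] {x : B}
    (h : ∀ y : B, IsNilpotent (y * x)) : x ∈ Ideal.jacobson (⊥ : Ideal B) := by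
  refine Ideal.mem_jacobson_iff.mpr fun y => ?_
  obtain ⟨u, hu⟩ := (h y).isUnit_one_add
  refine ⟨↑u⁻¹, Ideal.mem_bot.mpr ?_⟩
  calc (↑u⁻¹ : B) * y * x + ↑u⁻¹ - 1 = ↑u⁻¹ * (1 + y * x) - 1 := by noncomm_ring
    _ = 0 := by rw [← hu, Units.inv_mul, sub_self]

theorem isNilpotent_of_mem_jacobson_bot {B : Type*} [Ring B] [IsArtinianRing B] {x : B}
    (hx : x ∈ Ideal.jacobson (⊥ : Ideal B)) : IsNilpotent x := by
  obtain ⟨n, hn⟩ := IsArtinianRing.isNilpotent_jacobson_bot (R := B)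
  exact ⟨n, by simpa [hn] using Ideal.pow_mem_pow hx n⟩

section IntegralLattice

variable (O : Type*) {K M : Type*} [CommRing O] [Field K] [Algebra O K]
  [AddCommGroup M] [Module O M]

def Submodule.integralLattice (V : Submodule K (K ⊗[O] M)) : Submodule O M :=
  (V.restrictScalars O).comap (TensorProduct.mk O K M 1)

variable {O} [IsDomain O] [IsFractionRing O K]

theorem IsFractionRing.algebraMap_inv_smul_smul {N : Type*} [AddCommGroup N] [Module K N]
    [Module O N] [IsScalarTower O K N] {c : O} (hc : c ∈ nonZeroDivisors O) (y : N) :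
    (algebraMap O K c)⁻¹ • c • y = y := by
  rw [← algebraMap_smul K c y, smul_smul,
    inv_mul_cancel₀ (IsFractionRing.to_map_ne_zero_of_mem_nonZeroDivisors hc), one_smul]

instance Submodule.isTorsionFree_quotient_integralLattice (V : Submodule K (K ⊗[O] M)) :
    Module.IsTorsionFree O (M ⧸ V.integralLattice O) := by
  refine Module.IsTorsionFree.of_smul_eq_zero fun c x hcx => or_iff_not_imp_left.mpr fun hc => ?_
  induction x using Submodule.Quotient.induction_on with | _ x => ?_
  rw [← Submodule.Quotient.mk_smul, Submodule.Quotient.mk_eq_zero] at hcx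
  rw [Submodule.Quotient.mk_eq_zero]
  have hx := V.smul_mem (algebraMap O K c)⁻¹ hcx
  rwa [TensorProduct.mk_apply, tmul_smul, IsFractionRing.algebraMap_inv_smul_smul
    (N := K ⊗[O] M) (mem_nonZeroDivisors_of_ne_zero hc)] at hx

theorem Submodule.le_range_baseChange_subtype_integralLattice (V : Submodule K (K ⊗[O] M)) :
    V ≤ LinearMap.range ((V.integralLattice O).subtype.baseChange K) := by
  intro x hx
  obtain ⟨⟨m, c⟩, hcx⟩ := IsLocalizedModule.surj (nonZeroDivisors O) (TensorProduct.mk O K M 1) x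
  have hm : m ∈ V.integralLattice O := by
    show TensorProduct.mk O K M 1 m ∈ V
    exact hcx ▸ V.smul_of_tower_mem c hx
  refine ⟨(algebraMap O K c)⁻¹ ⊗ₜ ⟨m, hm⟩, ?_⟩
  rw [LinearMap.baseChange_tmul, Submodule.subtype_apply, ← mul_one (algebraMap O K c)⁻¹,
    ← smul_eq_mul, ← smul_tmul', ← TensorProduct.mk_apply, ← hcx, Submonoid.smul_def,
    IsFractionRing.algebraMap_inv_smul_smul (N := K ⊗[O] M) c.2]

end IntegralLattice

section Jacobson

variable {O K k A : Type*} [CommRing O] [Field K] [Algebra O K] [CommRing k] [Algebra O k]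
  [Ring A] [Algebra O A]

theorem one_tmul_mem_jacobson_bot_of_mem_integralLattice
    (hK : Function.Injective (algebraMap O K)) (hk : Function.Surjective (algebraMap O k))
    [Module.Flat O A] [IsArtinianRing (K ⊗[O] A)] {a : A}
    (ha : a ∈ ((⊥ : Ideal (K ⊗[O] A)).jacobson.restrictScalars K).integralLattice O) :
    (1 : k) ⊗ₜ[O] a ∈ (⊥ : Ideal (k ⊗[O] A)).jacobson := by
  refine mem_jacobson_bot_of_forall_isNilpotent_mul fun y => ?_
  obtain ⟨b, rfl⟩ := Algebra.TensorProduct.includeRight_surjective A hk y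
  have hba : IsNilpotent (b * a) := by
    rw [← IsNilpotent.map_iff (Algebra.TensorProduct.includeRight_injective (B := A) hK)]
    refine isNilpotent_of_mem_jacobson_bot ?_
    rw [map_mul]
    exact Ideal.mul_mem_left _ _ ha
  simpa using hba.map (Algebra.TensorProduct.includeRight : A →ₐ[O] k ⊗[O] A)

theorem range_baseChange_subtype_integralLattice_jacobson_le
    (hK : Function.Injective (algebraMap O K)) (hk : Function.Surjective (algebraMap O k))
    [Module.Flat O A] [IsArtinianRing (K ⊗[O] A)] :
    LinearMap.range
        ((((⊥ : Ideal (K ⊗[O] A)).jacobson.restrictScalars K).integralLattice O).subtype.baseChange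
          k) ≤
      (⊥ : Ideal (k ⊗[O] A)).jacobson.restrictScalars k := by
  rintro _ ⟨x, rfl⟩
  induction x using TensorProduct.induction_on with
  | zero => simp
  | tmul t a =>
    rw [LinearMap.baseChange_tmul, ← mul_one t, ← smul_eq_mul, ← smul_tmul']
    exact Submodule.smul_mem _ t (one_tmul_mem_jacobson_bot_of_mem_integralLattice hK hk a.2)
  | add x y hx hy => simpa using add_mem hx hy

end Jacobson

theorem jacobson_dim_special_fiber_ge_general
    (O : Type) [CommRing O] [IsDomain O] [IsDiscreteValuationRing O]
    (K : Type) [Field K] [Algebra O K] [IsFractionRing O K]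
    (A : Type) [Ring A] [Algebra O A] [Module.Free O A] [Module.Finite O A] :
    Module.finrank (O ⧸ IsLocalRing.maximalIdeal O)
        ((Ideal.jacobson (⊥ : Ideal ((O ⧸ IsLocalRing.maximalIdeal O) ⊗[O] A))).restrictScalars
          (O ⧸ IsLocalRing.maximalIdeal O)) ≥
      Module.finrank K ((Ideal.jacobson (⊥ : Ideal (K ⊗[O] A))).restrictScalars K) := by
  let k := O ⧸ IsLocalRing.maximalIdeal O
  let _ : Field k := Ideal.Quotient.field _
  have : IsArtinianRing (K ⊗[O] A) := .of_finite K _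
  have hK := IsFractionRing.injective O K
  have hk : Function.Surjective (algebraMap O k) := Ideal.Quotient.mk_surjective
  let J := ((⊥ : Ideal (K ⊗[O] A)).jacobson.restrictScalars K).integralLattice O
  calc Module.finrank K ((⊥ : Ideal (K ⊗[O] A)).jacobson.restrictScalars K)
      ≤ Module.finrank K (LinearMap.range (J.subtype.baseChange K)) :=
        Submodule.finrank_mono (Submodule.le_range_baseChange_subtype_integralLattice _)
    _ = Module.finrank k (LinearMap.range (J.subtype.baseChange k)) := by
        rw [J.finrank_range_baseChange_subtype K, J.finrank_range_baseChange_subtype k]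
    _ ≤ Module.finrank k ((⊥ : Ideal (k ⊗[O] A)).jacobson.restrictScalars k) :=
        Submodule.finrank_mono (range_baseChange_subtype_integralLattice_jacobson_le hK hk)

/-- Let `O` be a DVR with maximal ideal `m`, residue field `k = O/m` and
fraction field `K`, and let `A` be a finite free `O`-algebra whose special fibre
`A(m) = k ⊗[O] A` is split.  Then `dim_k Jac(A(m)) ≥ dim_K Jac(A^K)`. -/
theorem jacobson_dim_special_fiber_ge
    (O : Type) [CommRing O] [IsDomain O] [IsDiscreteValuationRing O]
    (K : Type) [Field K] [Algebra O K] [IsFractionRing O K]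
    (A : Type) [Ring A] [Algebra O A] [Module.Free O A] [Module.Finite O A]
    (hsplit : IsSplit (O ⧸ IsLocalRing.maximalIdeal O)
        ((O ⧸ IsLocalRing.maximalIdeal O) ⊗[O] A)) :
    Module.finrank (O ⧸ IsLocalRing.maximalIdeal O)
        ((Ideal.jacobson (⊥ : Ideal ((O ⧸ IsLocalRing.maximalIdeal O) ⊗[O] A))).restrictScalars
          (O ⧸ IsLocalRing.maximalIdeal O)) ≥
      Module.finrank K ((Ideal.jacobson (⊥ : Ideal (K ⊗[O] A))).restrictScalars K) :=
  jacobson_dim_special_fiber_ge_general O K A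
end

section
/- Let R be a noetherian ring and X = Spec(R). Suppose for every irreducible closed subset Z of X (with generic point ξ) we are given an open subset U(ξ) of Z containing ξ. Then there exist finitely many points ξ₁,…,ξ_n ∈ X such that X = U(ξ₁) ∪ … ∪ U(ξ_n), and each U(ξᵢ) is locally closed in X. -/
/-!
Noetherian induction on closed sets. A closed set is a finite union of irreducible closed sets,
so it suffices to treat an irreducible closed `Z` with generic point `ξ`. The neighbourhood
`U ξ` of `ξ` in `Z` contains `Z ∩ V` for an open `V ∋ ξ`, and the rest, `Z \ V`, is a closed
set not containing `ξ`, hence strictly smaller than `Z` and finitely covered by induction.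
-/

open TopologicalSpace Set Filter Topology

section FiniteCover

variable {X ι : Type*} {U : ι → Set X} {s t : Set X}

def IsFinitelyCoveredBy (U : ι → Set X) (s : Set X) : Prop :=
  ∃ S : Set ι, S.Finite ∧ s ⊆ ⋃ i ∈ S, U i

namespace IsFinitelyCoveredBy

theorem of_subset {i : ι} (h : s ⊆ U i) : IsFinitelyCoveredBy U s :=
  ⟨{i}, finite_singleton i, by simpa using h⟩

theorem mono (h : IsFinitelyCoveredBy U t) (hst : s ⊆ t) : IsFinitelyCoveredBy U s :=
  let ⟨S, hS, htS⟩ := h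
  ⟨S, hS, hst.trans htS⟩

theorem union (hs : IsFinitelyCoveredBy U s) (ht : IsFinitelyCoveredBy U t) :
    IsFinitelyCoveredBy U (s ∪ t) := by
  obtain ⟨S, hS, hsS⟩ := hs
  obtain ⟨T, hT, htT⟩ := ht
  refine ⟨S ∪ T, hS.union hT, union_subset ?_ ?_⟩
  · exact hsS.trans (biUnion_subset_biUnion_left subset_union_left)
  · exact htT.trans (biUnion_subset_biUnion_left subset_union_right)

theorem sUnion {T : Set (Set X)} (hT : T.Finite) (h : ∀ t ∈ T, IsFinitelyCoveredBy U t) :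
    IsFinitelyCoveredBy U (⋃₀ T) := by
  induction T, hT using Set.Finite.induction_on with
  | empty => exact ⟨∅, finite_empty, by simp⟩
  | @insert t T _ _ ih =>
    rw [sUnion_insert]
    exact (h t (mem_insert t T)).union (ih fun t' ht' => h t' (mem_insert_of_mem t ht'))

end IsFinitelyCoveredBy

end FiniteCover

namespace TopologicalSpace.NoetherianSpace

variable {X : Type*} [TopologicalSpace X] [NoetherianSpace X]

theorem isClosed_induction_irreducible {P : Set X → Prop}
    (sUnion : ∀ T : Set (Set X), T.Finite → (∀ t ∈ T, P t) → P (⋃₀ T))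
    (irreducible : ∀ Z, IsClosed Z → IsIrreducible Z → (∀ W, IsClosed W → W ⊂ Z → P W) → P Z)
    {Z : Set X} (hZ : IsClosed Z) : P Z := by
  lift Z to Closeds X using hZ
  induction Z using WellFoundedLT.induction with
  | _ Z ih =>
    obtain ⟨T, hT, hTclosed, hTirr, hZT⟩ := exists_finite_set_isClosed_irreducible Z.isClosed
    rw [hZT]
    refine sUnion T hT fun t ht => irreducible t (hTclosed t ht) (hTirr t ht) fun W hW hWt => ?_
    have htZ : t ⊆ Z := hZT ▸ subset_sUnion_of_mem ht
    exact ih ⟨W, hW⟩ (hWt.trans_subset htZ)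

theorem isFinitelyCoveredBy_of_mem_nhdsWithin_closure [QuasiSober X] {U : X → Set X}
    (hU : ∀ ξ, U ξ ∈ 𝓝[closure {ξ}] ξ) (s : Set X) : IsFinitelyCoveredBy U s := by
  suffices IsFinitelyCoveredBy U univ from this.mono (subset_univ s)
  refine isClosed_induction_irreducible (fun _ => IsFinitelyCoveredBy.sUnion) ?_ isClosed_univ
  intro Z hZ hZirr ih
  obtain ⟨ξ, hξ⟩ := QuasiSober.sober hZirr hZ
  obtain ⟨V, hV, hξV, hVU⟩ := mem_nhdsWithin.1 (hU ξ)
  have hdiff : Z \ V ⊂ Z := sdiff_ssubset_left_iff.2 ⟨ξ, hξ.mem, hξV⟩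
  have hgeneric : Z ∩ V ⊆ U ξ := by rwa [inter_comm, ← hξ.def]
  exact (IsFinitelyCoveredBy.of_subset hgeneric).union (ih _ (hZ.sdiff hV) hdiff)
    |>.mono (inter_union_sdiff Z V).ge

end TopologicalSpace.NoetherianSpace

/-- Let `R` be a noetherian ring and `X = Spec R`.  Suppose that to each
point `ξ` of `X` (the generic point of the irreducible closed subset `Z = closure {ξ}`)
we assign a subset `U ξ` of `Z`, open in `Z` and containing `ξ`.  Then finitely many of
the `U ξᵢ` cover `X`, and each `U ξᵢ` is locally closed in `X`. -/
theorem finite_stratification_by_generic_opens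
    (R : Type) [CommRing R] [IsNoetherianRing R]
    (U : PrimeSpectrum R → Set (PrimeSpectrum R))
    (hmem : ∀ ξ, ξ ∈ U ξ)
    (hopen : ∀ ξ, ∃ V : Set (PrimeSpectrum R), IsOpen V ∧ U ξ = closure {ξ} ∩ V) :
    ∃ (n : ℕ) (ξ : Fin n → PrimeSpectrum R),
      (⋃ i, U (ξ i)) = Set.univ ∧ ∀ i, IsLocallyClosed (U (ξ i)) := by
  have hnhds : ∀ ξ, U ξ ∈ 𝓝[closure {ξ}] ξ := fun ξ => by
    obtain ⟨V, hV, hUV⟩ := hopen ξ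
    rw [hUV]
    exact inter_mem_nhdsWithin _ (hV.mem_nhds (hUV ▸ hmem ξ).2)
  obtain ⟨S, hS, hcover⟩ := NoetherianSpace.isFinitelyCoveredBy_of_mem_nhdsWithin_closure hnhds univ
  obtain ⟨n, e, rfl⟩ := hS.fin_embedding
  refine ⟨n, e, univ_subset_iff.1 (by simpa [biUnion_range] using hcover), fun i => ?_⟩
  obtain ⟨V, hV, hUV⟩ := hopen (e i)
  exact hUV ▸ isClosed_closure.isLocallyClosed.inter hV.isLocallyClosed
end
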